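/- For any SIC decoding order σ (a permutation of (1,...,K)) with consecutive positions m, m+1 satisfying R_{σ(m)}/τ_{σ(m)} > R_{σ(m+1)}/τ_{σ(m+1)}, swapping positions m and m+1 strictly decreases the total power allocation sum: the difference between the original sum and the swapped sum equals [(2^{R_{σ(m)}}-1)(2^{R_{σ(m+1)}}-1)/(2^{R_{σ(m+1)}/τ_{σ(m+1)}}-1) - (2^{R_{σ(m)}}-1)(2^{R_{σ(m+1)}}-1)/(2^{R_{σ(m)}/τ_{σ(m)}}-1)] · ∏_{k=1}^{m-1} 2^{R_{σ(k)}}, which is strictly positive. -/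

import Mathlib

/-!
Write `Stot` as `∑ₗ aₗ ∏_{k<l} bₖ` with `aₗ` the OMA-matching coefficient of the user decoded
at position `l` and `bₖ = 2^R` for the user at position `k`. Swapping positions `m, m+1` leaves
every other term unchanged: the prefix products below `m` do not see the swap, and those past
`m+1` contain both swapped factors. The two remaining terms differ by
`(aₘ (1 - bₘ₊₁) + aₘ₊₁ (bₘ - 1)) ∏_{k<m} bₖ`, positive
because `x ↦ 2^x - 1` is positive and increasing on `(0, ∞)`.
-/

/-- Total power allocation coefficient sum required for NOMA to match OMA outage
performance per-user, under SIC decoding order `σ` (acting on user indices `1,…,K`). -/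
noncomputable def Stot (K : ℕ) (R τ : ℕ → ℝ) (σ : ℕ → ℕ) : ℝ :=
  ((2 : ℝ) ^ (R (σ 1)) - 1) / ((2 : ℝ) ^ (R (σ 1) / τ (σ 1)) - 1) +
    ∑ l ∈ Finset.Icc 2 K,
      (((2 : ℝ) ^ (R (σ l)) - 1) / ((2 : ℝ) ^ (R (σ l) / τ (σ l)) - 1)) *
        ∏ k ∈ Finset.Icc 1 (l - 1), (2 : ℝ) ^ (R (σ k))

open Finset

section PrefixWeightedSum

variable {M : Type*} [CommRing M]

def prefixWeightedSum (K : ℕ) (a b : ℕ → M) : M :=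
  ∑ l ∈ Icc 1 K, a l * ∏ k ∈ Icc 1 (l - 1), b k

theorem prod_Icc_comp_swap_of_ne {b : ℕ → M} {m j : ℕ} (hm : 1 ≤ m) (hj : j ≠ m) :
    ∏ k ∈ Icc 1 j, b (Equiv.swap m (m + 1) k) = ∏ k ∈ Icc 1 j, b k := by
  refine prod_equiv (Equiv.swap m (m + 1)) (fun i => ?_) (fun _ _ => rfl)
  simp only [mem_Icc, Equiv.swap_apply_def]
  split_ifs <;> omega

theorem prefixWeightedSum_sub_comp_swap (K : ℕ) (a b : ℕ → M) {m : ℕ} (hm : 1 ≤ m)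
    (hmK : m + 1 ≤ K) :
    prefixWeightedSum K a b -
        prefixWeightedSum K (fun l => a (Equiv.swap m (m + 1) l))
          (fun l => b (Equiv.swap m (m + 1) l)) =
      (a m * (1 - b (m + 1)) + a (m + 1) * (b m - 1)) * ∏ k ∈ Icc 1 (m - 1), b k := by
  set e := Equiv.swap m (m + 1)
  have hP : ∏ k ∈ Icc 1 (m - 1), b (e k) = ∏ k ∈ Icc 1 (m - 1), b k :=
    prod_Icc_comp_swap_of_ne hm (by omega)
  have hsucc (f : ℕ → M) : ∏ k ∈ Icc 1 m, f k = (∏ k ∈ Icc 1 (m - 1), f k) * f m := by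
    obtain ⟨n, rfl⟩ : ∃ n, m = n + 1 := ⟨m - 1, by omega⟩
    exact prod_Icc_succ_top (by omega) f
  rw [prefixWeightedSum, prefixWeightedSum, ← sum_sub_distrib,
    sum_eq_add m (m + 1) (by omega) ?_ (by simp; omega) (by simp; omega)]
  · simp only [Nat.add_sub_cancel, hsucc, hP, e, Equiv.swap_apply_left, Equiv.swap_apply_right]
    ring
  · intro l _ ⟨hlm, hlm1⟩
    rw [Equiv.swap_apply_of_ne_of_ne hlm hlm1, prod_Icc_comp_swap_of_ne hm (by omega), sub_self]

end PrefixWeightedSum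

noncomputable def powerCoeff (R τ : ℕ → ℝ) (n : ℕ) : ℝ :=
  ((2 : ℝ) ^ (R n) - 1) / ((2 : ℝ) ^ (R n / τ n) - 1)

theorem Stot_eq_prefixWeightedSum {K : ℕ} (hK : 1 ≤ K) (R τ : ℕ → ℝ) (σ : ℕ → ℕ) :
    Stot K R τ σ =
      prefixWeightedSum K (fun l => powerCoeff R τ (σ l)) (fun l => (2 : ℝ) ^ (R (σ l))) := by
  rw [prefixWeightedSum, ← insert_Icc_add_one_left_eq_Icc hK, sum_insert (by simp), Stot]
  simp [powerCoeff]

theorem powerCoeff_mul_add_powerCoeff_mul (R τ : ℕ → ℝ) (i j : ℕ) :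
    powerCoeff R τ i * (1 - (2 : ℝ) ^ (R j)) + powerCoeff R τ j * ((2 : ℝ) ^ (R i) - 1) =
      ((2 : ℝ) ^ (R i) - 1) * ((2 : ℝ) ^ (R j) - 1) / ((2 : ℝ) ^ (R j / τ j) - 1) -
        ((2 : ℝ) ^ (R i) - 1) * ((2 : ℝ) ^ (R j) - 1) / ((2 : ℝ) ^ (R i / τ i) - 1) := by
  rw [powerCoeff, powerCoeff]
  ring

theorem two_rpow_sub_one_pos {x : ℝ} (hx : 0 < x) : 0 < (2 : ℝ) ^ x - 1 :=
  sub_pos.2 (Real.one_lt_rpow one_lt_two hx)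

theorem div_two_rpow_sub_one_lt_div {c r r' : ℝ} (hc : 0 < c) (hr' : 0 < r') (hr : r' < r) :
    c / ((2 : ℝ) ^ r - 1) < c / ((2 : ℝ) ^ r' - 1) :=
  div_lt_div_of_pos_left hc (two_rpow_sub_one_pos hr')
    (sub_lt_sub_right (Real.rpow_lt_rpow_of_exponent_lt one_lt_two hr) 1)

theorem stmt_10 (K : ℕ) (R τ : ℕ → ℝ)
    (hR : ∀ n ∈ Finset.Icc 1 K, 0 < R n)
    (hτ : ∀ n ∈ Finset.Icc 1 K, 0 < τ n)
    (σ : ℕ → ℕ) (hσ : Set.BijOn σ ↑(Finset.Icc 1 K) ↑(Finset.Icc 1 K))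
    (m : ℕ) (hm : 1 ≤ m) (hmK : m + 1 ≤ K)
    (hinv : R (σ m) / τ (σ m) > R (σ (m + 1)) / τ (σ (m + 1))) :
    Stot K R τ σ - Stot K R τ (σ ∘ Equiv.swap m (m + 1)) =
        (((2 : ℝ) ^ (R (σ m)) - 1) * ((2 : ℝ) ^ (R (σ (m + 1))) - 1) /
            ((2 : ℝ) ^ (R (σ (m + 1)) / τ (σ (m + 1))) - 1) -
          ((2 : ℝ) ^ (R (σ m)) - 1) * ((2 : ℝ) ^ (R (σ (m + 1))) - 1) /
            ((2 : ℝ) ^ (R (σ m) / τ (σ m)) - 1)) *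
          ∏ k ∈ Finset.Icc 1 (m - 1), (2 : ℝ) ^ (R (σ k)) ∧
      0 < Stot K R τ σ - Stot K R τ (σ ∘ Equiv.swap m (m + 1)) := by
  have hdiff : Stot K R τ σ - Stot K R τ (σ ∘ Equiv.swap m (m + 1)) =
      (powerCoeff R τ (σ m) * (1 - (2 : ℝ) ^ (R (σ (m + 1)))) +
        powerCoeff R τ (σ (m + 1)) * ((2 : ℝ) ^ (R (σ m)) - 1)) *
        ∏ k ∈ Icc 1 (m - 1), (2 : ℝ) ^ (R (σ k)) := by
    rw [Stot_eq_prefixWeightedSum (by omega), Stot_eq_prefixWeightedSum (by omega)]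
    exact prefixWeightedSum_sub_comp_swap K _ _ hm hmK
  rw [powerCoeff_mul_add_powerCoeff_mul] at hdiff
  have hσm : σ m ∈ Icc 1 K := hσ.mapsTo (by simp; omega)
  have hσm1 : σ (m + 1) ∈ Icc 1 K := hσ.mapsTo (by simp; omega)
  have hgain := sub_pos.2 <| div_two_rpow_sub_one_lt_div
    (mul_pos (two_rpow_sub_one_pos (hR _ hσm)) (two_rpow_sub_one_pos (hR _ hσm1)))
    (div_pos (hR _ hσm1) (hτ _ hσm1)) hinv
  exact ⟨hdiff, hdiff ▸ mul_pos hgain (by positivity)⟩
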